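/- arXiv:cs/0110049 — 4 statements merged into one kernel-verified Lean document; each statement's English description precedes it below -/
import Mathlib

section
/- If G₁ and G₂ are graphs with involutory fixed-edge-free automorphisms φ₁ and φ₂ respectively, then ψ(u₁,u₂) = (φ₁(u₁), φ₂(u₂)) is an involutory fixed-edge-free automorphism of the lexicographic product G₁[G₂]. -/
open SimpleGraph

/-- The lexicographic product `G₁[G₂]`. -/
def lexProd {α β : Type*} (G₁ : SimpleGraph α) (G₂ : SimpleGraph β) :
    SimpleGraph (α × β) where
  Adj p q := G₁.Adj p.1 q.1 ∨ (p.1 = q.1 ∧ G₂.Adj p.2 q.2)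
  symm := by
    constructor
    rintro ⟨a, b⟩ ⟨c, d⟩ (h | ⟨h1, h2⟩)
    · exact Or.inl h.symm
    · exact Or.inr ⟨h1.symm, h2.symm⟩
  loopless := by
    constructor
    rintro ⟨a, b⟩ (h | ⟨h1, h2⟩)
    · exact G₁.irrefl h
    · exact G₂.irrefl h2

/-- If `φ₁` and `φ₂` are involutory fixed-edge-free automorphisms of `G₁` and `G₂`, then
`ψ(u₁,u₂) = (φ₁ u₁, φ₂ u₂)` is an involutory fixed-edge-free automorphism of the
lexicographic product `G₁[G₂]`. -/
theorem lexProd_ffe_involution {α β : Type*}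
    (G₁ : SimpleGraph α) (G₂ : SimpleGraph β)
    (φ₁ : G₁ ≃g G₁) (φ₂ : G₂ ≃g G₂)
    (hinv₁ : ∀ v, φ₁ (φ₁ v) = v) (hinv₂ : ∀ v, φ₂ (φ₂ v) = v)
    (hffe₁ : ∀ u v, G₁.Adj u v → s(φ₁ u, φ₁ v) ≠ s(u, v))
    (hffe₂ : ∀ u v, G₂.Adj u v → s(φ₂ u, φ₂ v) ≠ s(u, v)) :
    ∃ ψ : lexProd G₁ G₂ ≃g lexProd G₁ G₂,
      (∀ p : α × β, ψ p = (φ₁ p.1, φ₂ p.2)) ∧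
      (∀ p, ψ (ψ p) = p) ∧
      ∀ p q, (lexProd G₁ G₂).Adj p q → s(ψ p, ψ q) ≠ s(p, q) := by
  let e : α × β ≃ α × β :=
    { toFun := fun p => (φ₁ p.1, φ₂ p.2)
      invFun := fun p => (φ₁ p.1, φ₂ p.2)
      left_inv := fun p => by simp [hinv₁, hinv₂]
      right_inv := fun p => by simp [hinv₁, hinv₂] }
  refine ⟨⟨e, ?_⟩, fun p => rfl, fun p => Prod.ext (hinv₁ p.1) (hinv₂ p.2), ?_⟩
  · rintro ⟨a, b⟩ ⟨c, d⟩
    simp only [lexProd, e, Equiv.coe_fn_mk]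
    constructor
    · rintro (h | ⟨h1, h2⟩)
      · exact Or.inl (φ₁.map_adj_iff.mp h)
      · exact Or.inr ⟨φ₁.injective h1, φ₂.map_adj_iff.mp h2⟩
    · rintro (h | ⟨h1, h2⟩)
      · exact Or.inl (φ₁.map_adj_iff.mpr h)
      · exact Or.inr ⟨congrArg φ₁ h1, φ₂.map_adj_iff.mpr h2⟩
  · rintro ⟨a, b⟩ ⟨c, d⟩ hadj heq
    have heq' := Sym2.eq_iff.mp heq
    rcases hadj with h | ⟨h1, h2⟩
    · apply hffe₁ a c h
      rcases heq' with ⟨h3, h4⟩ | ⟨h3, h4⟩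
      · rw [Sym2.eq_iff]
        exact Or.inl ⟨congrArg Prod.fst h3, congrArg Prod.fst h4⟩
      · rw [Sym2.eq_iff]
        exact Or.inr ⟨congrArg Prod.fst h3, congrArg Prod.fst h4⟩
    · apply hffe₂ b d h2
      rcases heq' with ⟨h3, h4⟩ | ⟨h3, h4⟩
      · rw [Sym2.eq_iff]
        exact Or.inl ⟨congrArg Prod.snd h3, congrArg Prod.snd h4⟩
      · rw [Sym2.eq_iff]
        exact Or.inr ⟨congrArg Prod.snd h3, congrArg Prod.snd h4⟩
end

section
/- The graph obtained from K_{s,t} with s·t odd by deleting a single edge admits an involutory automorphism with no fixed edge. -/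
open SimpleGraph

/-- `K_{a,b}` with the edge `{Sum.inl x, Sum.inr y}` deleted. -/
def completeBipartiteMinusEdge (a b : ℕ) (x : Fin a) (y : Fin b) :
    SimpleGraph (Fin a ⊕ Fin b) :=
  (completeBipartiteGraph (Fin a) (Fin b)).deleteEdges {s(Sum.inl x, Sum.inr y)}

lemma myDoubleInj {n : ℕ} (hn : Odd n) {i j : Fin n} (h : i + i = j + j) : i = j := by
  haveI : NeZero n := ⟨hn.pos.ne'⟩
  have h' : (i.val + i.val) % n = (j.val + j.val) % n := by
    have := congrArg Fin.val h
    simpa [Fin.add_def] using this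
  have hm : 2 * i.val ≡ 2 * j.val [MOD n] := by
    simpa [Nat.ModEq, two_mul] using h'
  have hc : Nat.gcd n 2 = 1 := by
    have h2 : ¬ (2 ∣ n) := by
      rw [Nat.two_dvd_ne_zero]; exact Nat.odd_iff.mp hn
    have := Nat.Coprime.symm ((Nat.prime_two.coprime_iff_not_dvd).mpr h2)
    exact this
  have hmod := Nat.ModEq.cancel_left_of_coprime hc hm
  have hi := Nat.mod_eq_of_lt i.isLt
  have hj := Nat.mod_eq_of_lt j.isLt
  exact Fin.ext (by simp only [Nat.ModEq] at hmod; omega)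

/-- the reflection around `x`, an involution whose unique fixed point is `x`. -/
def myRefl {n : ℕ} [NeZero n] (x : Fin n) : Equiv.Perm (Fin n) :=
  ⟨fun i => x + x - i, fun i => x + x - i, fun i => by simp, fun i => by simp⟩

lemma myRefl_invol {n : ℕ} [NeZero n] (x : Fin n) (i : Fin n) :
    myRefl x (myRefl x i) = i := by simp [myRefl]

lemma myRefl_self {n : ℕ} [NeZero n] (x : Fin n) : myRefl x x = x := by simp [myRefl]

lemma myRefl_eq_iff {n : ℕ} [NeZero n] (x i : Fin n) : myRefl x i = x ↔ i = x := by
  constructor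
  · intro h
    exact (myRefl x).injective (h.trans (myRefl_self x).symm)
  · rintro rfl; exact myRefl_self _

lemma myRefl_fixed {n : ℕ} [NeZero n] (hn : Odd n) (x : Fin n) (i : Fin n) :
    myRefl x i = i ↔ i = x := by
  constructor
  · intro h
    have : x + x = i + i := by
      simpa [myRefl, sub_eq_iff_eq_add] using h
    exact (myDoubleInj hn this).symm
  · rintro rfl; exact myRefl_self _

/-- If `a * b` is odd (equivalently both `a` and `b` are odd), then `K_{a,b}` minus an edge
admits an involutory automorphism with no fixed edge. -/
theorem completeBipartiteMinusEdge_ffe_involution (a b : ℕ)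
    (ha : Odd a) (hb : Odd b) (x : Fin a) (y : Fin b) :
    ∃ φ : completeBipartiteMinusEdge a b x y ≃g completeBipartiteMinusEdge a b x y,
      (∀ v, φ (φ v) = v) ∧
      ∀ u v, (completeBipartiteMinusEdge a b x y).Adj u v →
        s(φ u, φ v) ≠ s(u, v) := by
  haveI : NeZero a := ⟨ha.pos.ne'⟩
  haveI : NeZero b := ⟨hb.pos.ne'⟩
  have hmap : ∀ u v : Fin a ⊕ Fin b,
      (completeBipartiteMinusEdge a b x y).Adj
        (Equiv.sumCongr (myRefl x) (myRefl y) u) (Equiv.sumCongr (myRefl x) (myRefl y) v) ↔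
      (completeBipartiteMinusEdge a b x y).Adj u v := by
    rintro (u | u) (v | v) <;>
      simp [completeBipartiteMinusEdge, deleteEdges_adj, Sym2.eq_iff,
        myRefl_eq_iff]
  refine ⟨⟨Equiv.sumCongr (myRefl x) (myRefl y), @fun u v => hmap u v⟩, ?_, ?_⟩
  · rintro (v | v) <;> simp [myRefl_invol]
  · rintro u v huv heq
    simp only [RelIso.coe_fn_mk] at heq
    rw [Sym2.eq_iff] at heq
    have hadj := huv
    rw [completeBipartiteMinusEdge, deleteEdges_adj] at hadj
    obtain ⟨hbip, hne⟩ := hadj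
    rcases u with u | u <;> rcases v with v | v
    · simp at hbip
    · -- inl, inr
      rcases heq with ⟨h1, h2⟩ | ⟨h1, h2⟩
      · simp only [Equiv.sumCongr_apply, Sum.map_inl, Sum.map_inr, Sum.inl.injEq,
          Sum.inr.injEq] at h1 h2
        rw [myRefl_fixed ha] at h1
        rw [myRefl_fixed hb] at h2
        exact hne (by simp [h1, h2])
      · simp at h1
    · -- inr, inl
      rcases heq with ⟨h1, h2⟩ | ⟨h1, h2⟩
      · simp only [Equiv.sumCongr_apply, Sum.map_inl, Sum.map_inr, Sum.inl.injEq,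
          Sum.inr.injEq] at h1 h2
        rw [myRefl_fixed hb] at h1
        rw [myRefl_fixed ha] at h2
        exact hne (by simp [h1, h2, Sym2.eq_swap])
      · simp at h1
    · simp at hbip
end

section
/- Let G be a graph and R(G) the graph obtained by subdividing every edge of G with a new vertex and then attaching a 3-star (path of three new edges from a claw: a center adjacent to the original vertex and two pendant leaves) at every non-isolated original vertex. Then every automorphism of R(G) maps the set of original vertices of G onto itself and induces an automorphism of G. -/
open SimpleGraph

/-- The vertex type of `R(G)`: original vertices, one subdivision vertex per edge, and a
3-star (center `(v, 0)` and leaves `(v, 1)`, `(v, 2)`) for every non-isolated vertex. -/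
abbrev RVert {V : Type*} (G : SimpleGraph V) : Type _ :=
  V ⊕ (G.edgeSet ⊕ ({v : V // ∃ w, G.Adj v w} × Fin 3))

/-- The adjacency generator for `R(G)`: an original vertex is adjacent to the subdivision
vertices of its incident edges; each non-isolated original vertex `v` is adjacent to its
star center `(v, 0)`; each star center `(v, 0)` is adjacent to the leaves `(v, 1)` and
`(v, 2)`. -/
def RRel {V : Type*} (G : SimpleGraph V) : RVert G → RVert G → Prop
  | Sum.inl u, Sum.inr (Sum.inl e) => u ∈ e.val
  | Sum.inl v, Sum.inr (Sum.inr (w, k)) => v = w.val ∧ k = 0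
  | Sum.inr (Sum.inr (w, k)), Sum.inr (Sum.inr (w', k')) => w = w' ∧ k = 0 ∧ k' ≠ 0
  | _, _ => False

/-- The graph `R(G)`: subdivide every edge of `G` and attach a 3-star at every
non-isolated original vertex. -/
def RGraph {V : Type*} (G : SimpleGraph V) : SimpleGraph (RVert G) :=
  SimpleGraph.fromRel (RRel G)

namespace RAux
variable {V : Type*} {G : SimpleGraph V}

lemma adj_inl_inl {u v : V} : ¬ (RGraph G).Adj (Sum.inl u) (Sum.inl v) := by
  simp [RGraph, fromRel_adj, RRel]

lemma adj_inl_sub {u : V} {e : G.edgeSet} :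
    (RGraph G).Adj (Sum.inl u) (Sum.inr (Sum.inl e)) ↔ u ∈ e.val := by
  simp [RGraph, fromRel_adj, RRel]

lemma adj_inl_star {v : V} {w : {v : V // ∃ w, G.Adj v w}} {k : Fin 3} :
    (RGraph G).Adj (Sum.inl v) (Sum.inr (Sum.inr (w, k))) ↔ v = w.val ∧ k = 0 := by
  simp [RGraph, fromRel_adj, RRel]

lemma adj_sub_sub {e e' : G.edgeSet} :
    ¬ (RGraph G).Adj (Sum.inr (Sum.inl e)) (Sum.inr (Sum.inl e')) := by
  simp [RGraph, fromRel_adj, RRel]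

lemma adj_sub_star {e : G.edgeSet} {w : {v : V // ∃ w, G.Adj v w}} {k : Fin 3} :
    ¬ (RGraph G).Adj (Sum.inr (Sum.inl e)) (Sum.inr (Sum.inr (w, k))) := by
  simp [RGraph, fromRel_adj, RRel]

lemma adj_star_star {w w' : {v : V // ∃ w, G.Adj v w}} {k k' : Fin 3} :
    (RGraph G).Adj (Sum.inr (Sum.inr (w, k))) (Sum.inr (Sum.inr (w', k'))) ↔
      w = w' ∧ ((k = 0 ∧ k' ≠ 0) ∨ (k' = 0 ∧ k ≠ 0)) := by
  constructor
  · rintro h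
    rw [RGraph, fromRel_adj] at h
    obtain ⟨hne, h | h⟩ := h
    · exact ⟨h.1, Or.inl h.2⟩
    · exact ⟨h.1.symm, Or.inr h.2⟩
  · rintro ⟨rfl, h | h⟩
    · rw [RGraph, fromRel_adj]
      refine ⟨by simp [h.1, Ne.symm h.2, h.2], Or.inl ⟨rfl, h⟩⟩
    · rw [RGraph, fromRel_adj]
      refine ⟨by simp [h.1, Ne.symm h.2, h.2], Or.inr ⟨rfl, h⟩⟩

def IsLeaf (G : SimpleGraph V) (x : RVert G) : Prop :=
  (∃ y, (RGraph G).Adj x y) ∧ ∀ y z, (RGraph G).Adj x y → (RGraph G).Adj x z → y = z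

def IsCenter (G : SimpleGraph V) (x : RVert G) : Prop :=
  ∃ y, (RGraph G).Adj x y ∧ IsLeaf G y

def IsOrig (G : SimpleGraph V) (x : RVert G) : Prop :=
  (∀ y, ¬ (RGraph G).Adj x y) ∨ (¬ IsLeaf G x ∧ ∃ y, (RGraph G).Adj x y ∧ IsCenter G y)

/-- an original vertex with a neighbor in R(G) is non-isolated in G -/
lemma nonisol_of_adj {v : V} {y : RVert G} (h : (RGraph G).Adj (Sum.inl v) y) :
    ∃ w, G.Adj v w := by
  rcases y with u | e | ⟨w, k⟩
  · exact absurd h adj_inl_inl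
  · rw [adj_inl_sub] at h
    obtain ⟨a, b, hab⟩ := Sym2.exists.mp ⟨e.val, rfl⟩
    have he := e.prop
    rw [hab] at he h
    rw [SimpleGraph.mem_edgeSet] at he
    rcases Sym2.mem_iff.mp h with rfl | rfl
    · exact ⟨b, he⟩
    · exact ⟨a, he.symm⟩
  · rw [adj_inl_star] at h
    obtain ⟨rfl, -⟩ := h
    exact w.prop

lemma not_isLeaf_inl {v : V} : ¬ IsLeaf G (Sum.inl v) := by
  rintro ⟨⟨y, hy⟩, huniq⟩
  obtain ⟨w, hw⟩ := nonisol_of_adj hy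
  have h1 : (RGraph G).Adj (Sum.inl v) (Sum.inr (Sum.inl ⟨s(v, w), hw⟩)) := by
    rw [adj_inl_sub]; exact Sym2.mem_mk_left v w
  have h2 : (RGraph G).Adj (Sum.inl v) (Sum.inr (Sum.inr (⟨v, w, hw⟩, 0))) := by
    rw [adj_inl_star]; exact ⟨rfl, rfl⟩
  exact absurd (huniq _ _ h1 h2) (by simp)

lemma not_isLeaf_sub {e : G.edgeSet} : ¬ IsLeaf G (Sum.inr (Sum.inl e)) := by
  rintro ⟨-, huniq⟩
  obtain ⟨a, b, hab⟩ := Sym2.exists.mp ⟨e.val, rfl⟩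
  have he := e.prop
  rw [hab] at he
  rw [SimpleGraph.mem_edgeSet] at he
  have h1 : (RGraph G).Adj (Sum.inr (Sum.inl e)) (Sum.inl a) := by
    rw [adj_comm, adj_inl_sub, hab]; exact Sym2.mem_mk_left a b
  have h2 : (RGraph G).Adj (Sum.inr (Sum.inl e)) (Sum.inl b) := by
    rw [adj_comm, adj_inl_sub, hab]; exact Sym2.mem_mk_right a b
  exact G.ne_of_adj he (by simpa using huniq _ _ h1 h2)

lemma isLeaf_iff {x : RVert G} :
    IsLeaf G x ↔ ∃ w k, k ≠ 0 ∧ x = Sum.inr (Sum.inr (w, k)) := by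
  constructor
  · intro hx
    rcases x with u | e | ⟨w, k⟩
    · exact absurd hx not_isLeaf_inl
    · exact absurd hx not_isLeaf_sub
    · refine ⟨w, k, ?_, rfl⟩
      rintro rfl
      obtain ⟨-, huniq⟩ := hx
      have h1 : (RGraph G).Adj (Sum.inr (Sum.inr (w, 0))) (Sum.inl w.val) := by
        rw [adj_comm, adj_inl_star]; exact ⟨rfl, rfl⟩
      have h2 : (RGraph G).Adj (Sum.inr (Sum.inr (w, (0:Fin 3)))) (Sum.inr (Sum.inr (w, 1))) := by
        rw [adj_star_star]; exact ⟨rfl, Or.inl ⟨rfl, by decide⟩⟩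
      exact absurd (huniq _ _ h1 h2) (by simp)
  · rintro ⟨w, k, hk, rfl⟩
    constructor
    · exact ⟨Sum.inr (Sum.inr (w, 0)), by rw [adj_star_star]; exact ⟨rfl, Or.inr ⟨rfl, hk⟩⟩⟩
    · rintro y z hy hz
      have hy0 : y = Sum.inr (Sum.inr (w, 0)) := by
        rcases y with u | e | ⟨w', k'⟩
        · rw [adj_comm, adj_inl_star] at hy; exact absurd hy.2 hk
        · exact absurd hy.symm adj_sub_star
        · rw [adj_star_star] at hy
          obtain ⟨rfl, h | h⟩ := hy
          · exact absurd h.1 hk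
          · rw [h.1]
      have hz0 : z = Sum.inr (Sum.inr (w, 0)) := by
        rcases z with u | e | ⟨w', k'⟩
        · rw [adj_comm, adj_inl_star] at hz; exact absurd hz.2 hk
        · exact absurd hz.symm adj_sub_star
        · rw [adj_star_star] at hz
          obtain ⟨rfl, h | h⟩ := hz
          · exact absurd h.1 hk
          · rw [h.1]
      rw [hy0, hz0]

lemma isCenter_iff {x : RVert G} :
    IsCenter G x ↔ ∃ w, x = Sum.inr (Sum.inr (w, 0)) := by
  constructor
  · rintro ⟨y, hadj, hleaf⟩
    obtain ⟨w, k, hk, rfl⟩ := isLeaf_iff.mp hleaf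
    rcases x with u | e | ⟨w', k'⟩
    · rw [adj_inl_star] at hadj; exact absurd hadj.2 hk
    · exact absurd hadj adj_sub_star
    · rw [adj_star_star] at hadj
      obtain ⟨rfl, h | h⟩ := hadj
      · exact ⟨_, by rw [h.1]⟩
      · exact absurd h.1 hk
  · rintro ⟨w, rfl⟩
    refine ⟨Sum.inr (Sum.inr (w, 1)), ?_, ?_⟩
    · rw [adj_star_star]; exact ⟨rfl, Or.inl ⟨rfl, by decide⟩⟩
    · exact isLeaf_iff.mpr ⟨w, 1, by decide, rfl⟩

lemma isOrig_iff {x : RVert G} : IsOrig G x ↔ ∃ v, x = Sum.inl v := by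
  constructor
  · intro hx
    rcases x with u | e | ⟨w, k⟩
    · exact ⟨u, rfl⟩
    · rcases hx with h | ⟨-, y, hadj, hc⟩
      · obtain ⟨a, b, hab⟩ := Sym2.exists.mp ⟨e.val, rfl⟩
        exact absurd (by rw [adj_comm, adj_inl_sub, hab]; exact Sym2.mem_mk_left a b :
          (RGraph G).Adj (Sum.inr (Sum.inl e)) (Sum.inl a)) (h _)
      · obtain ⟨w, rfl⟩ := isCenter_iff.mp hc
        exact absurd hadj adj_sub_star
    · rcases hx with h | ⟨hnl, y, hadj, hc⟩
      · by_cases hk : k = 0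
        · subst hk
          exact absurd (by rw [adj_star_star]; exact ⟨rfl, Or.inl ⟨rfl, by decide⟩⟩ :
            (RGraph G).Adj (Sum.inr (Sum.inr (w, 0))) (Sum.inr (Sum.inr (w, 1)))) (h _)
        · exact absurd (by rw [adj_star_star]; exact ⟨rfl, Or.inr ⟨rfl, hk⟩⟩ :
            (RGraph G).Adj (Sum.inr (Sum.inr (w, k))) (Sum.inr (Sum.inr (w, 0)))) (h _)
      · by_cases hk : k = 0
        · subst hk
          obtain ⟨w', rfl⟩ := isCenter_iff.mp hc
          rw [adj_star_star] at hadj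
          obtain ⟨rfl, h | h⟩ := hadj
          · exact absurd rfl h.2
          · exact absurd rfl h.2
        · exact absurd (isLeaf_iff.mpr ⟨w, k, hk, rfl⟩) hnl
  · rintro ⟨v, rfl⟩
    by_cases h : ∃ w, G.Adj v w
    · refine Or.inr ⟨not_isLeaf_inl, Sum.inr (Sum.inr (⟨v, h⟩, 0)), ?_, isCenter_iff.mpr ⟨_, rfl⟩⟩
      rw [adj_inl_star]; exact ⟨rfl, rfl⟩
    · exact Or.inl fun y hy => h (nonisol_of_adj hy)

lemma gAdj_iff_common {u v : V} :
    G.Adj u v ↔ u ≠ v ∧ ∃ x, (RGraph G).Adj (Sum.inl u) x ∧ (RGraph G).Adj (Sum.inl v) x := by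
  constructor
  · intro h
    refine ⟨G.ne_of_adj h, Sum.inr (Sum.inl ⟨s(u, v), h⟩), ?_, ?_⟩
    · rw [adj_inl_sub]; exact Sym2.mem_mk_left u v
    · rw [adj_inl_sub]; exact Sym2.mem_mk_right u v
  · rintro ⟨hne, x, hu, hv⟩
    rcases x with a | e | ⟨w, k⟩
    · exact absurd hu adj_inl_inl
    · rw [adj_inl_sub] at hu hv
      have := (Sym2.mem_and_mem_iff hne).mp ⟨hu, hv⟩
      have he := e.prop
      rw [this, SimpleGraph.mem_edgeSet] at he
      exact he
    · rw [adj_inl_star] at hu hv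
      exact absurd (hu.1.trans hv.1.symm) hne

variable (ψ : RGraph G ≃g RGraph G)

lemma isLeaf_map (x : RVert G) : IsLeaf G (ψ x) ↔ IsLeaf G x := by
  unfold IsLeaf
  constructor
  · rintro ⟨⟨y, hy⟩, huniq⟩
    refine ⟨⟨ψ.symm y, ?_⟩, fun a b ha hb => ?_⟩
    · have := ψ.map_adj_iff (v := x) (w := ψ.symm y)
      rw [ψ.apply_symm_apply] at this
      exact this.mp hy
    · have ha' : (RGraph G).Adj (ψ x) (ψ a) := ψ.map_adj_iff.mpr ha
      have hb' : (RGraph G).Adj (ψ x) (ψ b) := ψ.map_adj_iff.mpr hb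
      exact ψ.injective (huniq _ _ ha' hb')
  · rintro ⟨⟨y, hy⟩, huniq⟩
    refine ⟨⟨ψ y, ψ.map_adj_iff.mpr hy⟩, fun a b ha hb => ?_⟩
    have ha' : (RGraph G).Adj x (ψ.symm a) := by
      have := ψ.map_adj_iff (v := x) (w := ψ.symm a)
      rw [ψ.apply_symm_apply] at this
      exact this.mp ha
    have hb' : (RGraph G).Adj x (ψ.symm b) := by
      have := ψ.map_adj_iff (v := x) (w := ψ.symm b)
      rw [ψ.apply_symm_apply] at this
      exact this.mp hb
    have := huniq _ _ ha' hb'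
    simpa using congrArg ψ this

lemma isCenter_map (x : RVert G) : IsCenter G (ψ x) ↔ IsCenter G x := by
  unfold IsCenter
  constructor
  · rintro ⟨y, hy, hl⟩
    refine ⟨ψ.symm y, ?_, ?_⟩
    · have := ψ.map_adj_iff (v := x) (w := ψ.symm y)
      rw [ψ.apply_symm_apply] at this
      exact this.mp hy
    · rw [← isLeaf_map ψ, ψ.apply_symm_apply]; exact hl
  · rintro ⟨y, hy, hl⟩
    exact ⟨ψ y, ψ.map_adj_iff.mpr hy, (isLeaf_map ψ y).mpr hl⟩

lemma isOrig_map (x : RVert G) : IsOrig G (ψ x) → IsOrig G x := by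
  rintro (h | ⟨hnl, y, hy, hc⟩)
  · refine Or.inl fun y hy => h (ψ y) (ψ.map_adj_iff.mpr hy)
  · refine Or.inr ⟨fun hl => hnl ((isLeaf_map ψ x).mpr hl), ψ.symm y, ?_, ?_⟩
    · have := ψ.map_adj_iff (v := x) (w := ψ.symm y)
      rw [ψ.apply_symm_apply] at this
      exact this.mp hy
    · rw [← isCenter_map ψ, ψ.apply_symm_apply]; exact hc

lemma orig_to_orig (v : V) : ∃ v', ψ (Sum.inl v) = Sum.inl v' := by
  exact isOrig_iff.mp (isOrig_map ψ.symm _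
    (by rw [ψ.symm_apply_apply]; exact isOrig_iff.mpr ⟨v, rfl⟩))

end RAux

/-- Every automorphism of `R(G)` maps the set of original vertices of `G` onto itself and
induces an automorphism of `G`. -/
theorem RGraph_aut_induces_aut {V : Type*} [Fintype V] (G : SimpleGraph V)
    (ψ : RGraph G ≃g RGraph G) :
    ∃ φ : G ≃g G, ∀ v : V, ψ (Sum.inl v) = Sum.inl (φ v) := by
  classical
  set f : V → V := fun v => (RAux.orig_to_orig ψ v).choose with hfdef
  have hf : ∀ v, ψ (Sum.inl v) = Sum.inl (f v) := fun v => (RAux.orig_to_orig ψ v).choose_spec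
  set g : V → V := fun v => (RAux.orig_to_orig ψ.symm v).choose with hgdef
  have hg : ∀ v, ψ.symm (Sum.inl v) = Sum.inl (g v) :=
    fun v => (RAux.orig_to_orig ψ.symm v).choose_spec
  have hgf : ∀ v, g (f v) = v := by
    intro v
    have : Sum.inl (g (f v)) = (Sum.inl v : RVert G) := by
      rw [← hg (f v), ← hf v, ψ.symm_apply_apply]
    exact Sum.inl.inj this
  have hfg : ∀ v, f (g v) = v := by
    intro v
    have : Sum.inl (f (g v)) = (Sum.inl v : RVert G) := by
      rw [← hf (g v), ← hg v, ψ.apply_symm_apply]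
    exact Sum.inl.inj this
  have hmap : ∀ u v : V, G.Adj (f u) (f v) ↔ G.Adj u v := by
    intro u v
    rw [RAux.gAdj_iff_common, RAux.gAdj_iff_common (u := u)]
    constructor
    · rintro ⟨hne, x, hu, hv⟩
      refine ⟨fun h => hne (by rw [h]), ψ.symm x, ?_, ?_⟩
      · have := ψ.map_adj_iff (v := Sum.inl u) (w := ψ.symm x)
        rw [ψ.apply_symm_apply, hf] at this
        exact this.mp hu
      · have := ψ.map_adj_iff (v := Sum.inl v) (w := ψ.symm x)
        rw [ψ.apply_symm_apply, hf] at this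
        exact this.mp hv
    · rintro ⟨hne, x, hu, hv⟩
      refine ⟨fun h => hne (by rw [← hgf u, ← hgf v, h]), ψ x, ?_, ?_⟩
      · rw [← hf]; exact ψ.map_adj_iff.mpr hu
      · rw [← hf]; exact ψ.map_adj_iff.mpr hv
  exact ⟨⟨⟨f, g, hgf, hfg⟩, hmap _ _⟩, hf⟩
end

section
/- Let G₀ and G₁ be connected graphs, each with the same odd number m of edges, and let G = G₀ + G₁ be their disjoint union. If α is an involutory fixed-edge-free automorphism of G, then α maps V(G₀) onto V(G₁) (and vice versa), hence its restriction gives an isomorphism between G₀ and G₁. -/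
open SimpleGraph

private lemma even_card_of_invol {β : Type*} [DecidableEq β] (s : Finset β)
    (g : β → β) (hmap : ∀ x ∈ s, g x ∈ s) (hinv : ∀ x ∈ s, g (g x) = x)
    (hnf : ∀ x ∈ s, g x ≠ x) : Even s.card := by
  induction s using Finset.strongInduction with
  | _ s ih =>
    rcases s.eq_empty_or_nonempty with rfl | ⟨a, ha⟩
    · simp
    · have hga : g a ∈ s := hmap a ha
      have hne : g a ≠ a := hnf a ha
      have hpair : ({a, g a} : Finset β) ⊆ s := by
        intro x hx
        rcases Finset.mem_insert.mp hx with rfl | hx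
        · exact ha
        · rw [Finset.mem_singleton] at hx; subst hx; exact hga
      set t := s \ {a, g a} with ht
      have hsub : t ⊂ s :=
        (Finset.ssubset_iff_of_subset Finset.sdiff_subset).mpr
          ⟨a, ha, by simp [ht]⟩
      have hmem : ∀ x, x ∈ t ↔ x ∈ s ∧ x ≠ a ∧ x ≠ g a := by
        intro x; simp [ht, and_assoc]
      have hcard : s.card = t.card + 2 := by
        have h2 : 2 ≤ s.card := by
          have := Finset.card_le_card hpair
          rwa [Finset.card_pair (Ne.symm hne)] at this
        rw [ht, Finset.card_sdiff_of_subset hpair, Finset.card_pair (Ne.symm hne)]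
        omega
      have heven : Even t.card := by
        refine ih t hsub (fun x hx => ?_) (fun x hx => hinv x ((hmem x).mp hx).1)
          (fun x hx => hnf x ((hmem x).mp hx).1)
        obtain ⟨hxs, hxa, hxga⟩ := (hmem x).mp hx
        refine (hmem (g x)).mpr ⟨hmap x hxs, ?_, ?_⟩
        · intro h; exact hxga (by rw [← h, hinv x hxs])
        · intro h
          apply hxa
          have := congrArg g h
          rwa [hinv x hxs, hinv a ha] at this
      rw [hcard]
      exact heven.add (Even.add_self 1)

/-- Let `G₀` and `G₁` be connected graphs, each with the same odd number `m` of edges. If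
`α` is an involutory fixed-edge-free automorphism of the disjoint union `G₀ ⊕g G₁`, then
`α` maps `V(G₀)` onto `V(G₁)`, and its restriction gives an isomorphism `G₀ ≃ G₁`. -/
theorem sum_ffe_involution_swaps_components {V₀ V₁ : Type*} [Fintype V₀] [Fintype V₁]
    (G₀ : SimpleGraph V₀) (G₁ : SimpleGraph V₁)
    [Fintype G₀.edgeSet] [Fintype G₁.edgeSet]
    (h₀ : G₀.Connected) (h₁ : G₁.Connected)
    (m : ℕ) (hm : Odd m)
    (hc₀ : G₀.edgeFinset.card = m) (hc₁ : G₁.edgeFinset.card = m)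
    (α : (G₀ ⊕g G₁) ≃g (G₀ ⊕g G₁))
    (hinv : ∀ x, α (α x) = x)
    (hffe : ∀ x y, (G₀ ⊕g G₁).Adj x y → s(α x, α y) ≠ s(x, y)) :
    ∃ φ : G₀ ≃g G₁, ∀ v : V₀, α (Sum.inl v) = Sum.inr (φ v) := by
  classical
  -- reachable vertices lie on the same side
  have side : ∀ x y : V₀ ⊕ V₁, (G₀ ⊕g G₁).Reachable x y → x.isLeft = y.isLeft := by
    intro x y hr
    obtain ⟨w⟩ := hr
    induction w with
    | nil => rfl
    | cons h p ih =>
      rename_i u a b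
      have h1 : u.isLeft = a.isLeft := by
        cases u <;> cases a <;> simp_all [SimpleGraph.sum_adj]
      exact h1.trans ih
  obtain ⟨v₀⟩ := h₀.nonempty
  have reach0 : ∀ v : V₀, (G₀ ⊕g G₁).Reachable (Sum.inl v₀) (Sum.inl v) := fun v =>
    Reachable.map Embedding.sumInl.toHom (h₀.preconnected v₀ v)
  have αside0 : ∀ v : V₀, (α (Sum.inl v)).isLeft = (α (Sum.inl v₀)).isLeft := fun v =>
    (side _ _ (Reachable.map α.toHom (reach0 v))).symm
  cases hα : α (Sum.inl v₀) with
  | inl w₀ =>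
    -- contradiction: α restricts to an ffe involution of G₀, forcing even edge count
    exfalso
    have hL : ∀ v : V₀, ∃ w : V₀, α (Sum.inl v) = Sum.inl w := by
      intro v
      have := αside0 v
      rw [hα] at this
      exact Sum.isLeft_iff.mp this
    choose f hf using hL
    have hff : ∀ v, f (f v) = v := by
      intro v
      have : Sum.inl (f (f v)) = (Sum.inl v : V₀ ⊕ V₁) := by
        rw [← hf, ← hf, hinv]
      exact Sum.inl_injective this
    have hadj : ∀ u v : V₀, G₀.Adj u v → G₀.Adj (f u) (f v) := by
      intro u v h
      have h2 : (G₀ ⊕g G₁).Adj (α (Sum.inl u)) (α (Sum.inl v)) :=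
        α.map_adj_iff.mpr (by simpa [SimpleGraph.sum_adj] using h)
      rw [hf, hf] at h2
      simpa [SimpleGraph.sum_adj] using h2
    have heven : Even G₀.edgeFinset.card := by
      apply even_card_of_invol G₀.edgeFinset (Sym2.map f)
      · intro e he
        induction e with
        | _ u v =>
          rw [Sym2.map_pair_eq, mem_edgeFinset, mem_edgeSet]
          rw [mem_edgeFinset, mem_edgeSet] at he
          exact hadj u v he
      · intro e _
        induction e with
        | _ u v => simp [Sym2.map_pair_eq, hff]
      · intro e he
        induction e with
        | _ u v =>
          rw [mem_edgeFinset, mem_edgeSet] at he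
          rw [Sym2.map_pair_eq]
          intro hcontra
          apply hffe (Sum.inl u) (Sum.inl v) (by simpa [SimpleGraph.sum_adj] using he)
          rw [hf, hf]
          have := congrArg (Sym2.map (Sum.inl : V₀ → V₀ ⊕ V₁)) hcontra
          simpa [Sym2.map_pair_eq] using this
    rw [hc₀] at heven
    exact (Nat.not_even_iff_odd.mpr hm) heven
  | inr w₀ =>
    have hL : ∀ v : V₀, ∃ w : V₁, α (Sum.inl v) = Sum.inr w := by
      intro v
      have := αside0 v
      rw [hα] at this
      exact Sum.isRight_iff.mp (by simpa using this)
    choose f hf using hL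
    have hR : ∀ w : V₁, ∃ u : V₀, α (Sum.inr w) = Sum.inl u := by
      intro w
      have hreach : (G₀ ⊕g G₁).Reachable (Sum.inr (f v₀)) (Sum.inr w) :=
        Reachable.map Embedding.sumInr.toHom (h₁.preconnected (f v₀) w)
      have h1 : (α (Sum.inr w)).isLeft = (α (Sum.inr (f v₀))).isLeft :=
        (side _ _ (Reachable.map α.toHom hreach)).symm
      have h2 : α (Sum.inr (f v₀)) = Sum.inl v₀ := by rw [← hf, hinv]
      rw [h2] at h1
      exact Sum.isLeft_iff.mp h1
    choose g hg using hR
    have hgf : ∀ v, g (f v) = v := by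
      intro v
      have : Sum.inl (g (f v)) = (Sum.inl v : V₀ ⊕ V₁) := by
        rw [← hg, ← hf, hinv]
      exact Sum.inl_injective this
    have hfg : ∀ w, f (g w) = w := by
      intro w
      have : Sum.inr (f (g w)) = (Sum.inr w : V₀ ⊕ V₁) := by
        rw [← hf, ← hg, hinv]
      exact Sum.inr_injective this
    refine ⟨⟨⟨f, g, hgf, hfg⟩, ?_⟩, hf⟩
    intro u v
    have h2 : (G₀ ⊕g G₁).Adj (α (Sum.inl u)) (α (Sum.inl v)) ↔
        (G₀ ⊕g G₁).Adj (Sum.inl u) (Sum.inl v) := α.map_adj_iff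
    rw [hf, hf] at h2
    simpa [SimpleGraph.sum_adj] using h2
end
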